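/- The sum of the interior angles of a nondegenerate spherical triangle on the unit sphere is strictly greater than π (and strictly less than 3π). -/

import Mathlib

open scoped RealInnerProductSpace

/-- Interior angle of a spherical triangle at vertex `u`, between the sides
towards `v` and `w`. -/
noncomputable def sphAngle (u v w : EuclideanSpace ℝ (Fin 3)) : ℝ :=
  InnerProductGeometry.angle (v - ⟪u, v⟫ • u) (w - ⟪u, w⟫ • u)

/-!
Pass to the polar triangle `p = v × w`, `q = w × u`, `r = u × v`. For a unit vector `u`, Lagrange's
identity gives `⟪u × a, u × b⟫ = ⟪a - ⟪u, a⟫ u, b - ⟪u, b⟫ u⟫`, so each interior angle is the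
supplement of a side of the polar triangle, e.g. `A = π - ∠(q, r)`. The polar vertices are again
linearly independent, being biorthogonal to `u, v, w` up to the nonzero triple product. Finally,
the sides of a nondegenerate spherical triangle are positive and sum to less than `2π`: the
triangle inequality `∠(y, z) ≤ ∠(y, -x) + ∠(-x, z)` is strict since `y, z` are not antipodal and
`-x` is not in the cone they span.
-/

open InnerProductGeometry Real

namespace InnerProductGeometry

variable {V : Type*} [NormedAddCommGroup V] [InnerProductSpace ℝ V]

theorem angle_pos_of_linearIndependent {x y : V} (h : LinearIndependent ℝ ![x, y]) :
    0 < angle x y := by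
  refine (angle_nonneg x y).lt_of_ne' fun h0 => ?_
  obtain ⟨-, r, -, rfl⟩ := angle_eq_zero_iff.mp h0
  simpa using LinearIndependent.pair_iff.mp h r (-1) (by simp)

theorem angle_add_angle_add_angle_lt_two_pi {x y z : V}
    (h : LinearIndependent ℝ ![x, y, z]) :
    angle x y + angle y z + angle z x < 2 * π := by
  obtain ⟨hyz, hx⟩ := linearIndependent_finCons.mp h
  have hx0 : -x ≠ 0 := neg_ne_zero.mpr fun h0 => hx (h0 ▸ Submodule.zero_mem _)
  have htri : angle y z < angle y (-x) + angle (-x) z := by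
    refine (angle_le_angle_add_angle y (-x) z).lt_of_ne fun heq => ?_
    rcases (angle_eq_angle_add_angle_iff hx0).mp heq with hπ | hmem
    · obtain ⟨-, r, -, rfl⟩ := angle_eq_pi_iff.mp hπ
      simpa using LinearIndependent.pair_iff.mp hyz r (-1) (by simp)
    · refine hx ?_
      rw [Matrix.range_cons_cons_empty, ← neg_neg x]
      exact neg_mem (Submodule.span_le_restrictScalars NNReal ℝ _ hmem)
  rw [angle_neg_right, angle_neg_left, angle_comm y x] at htri
  rw [angle_comm z x]
  linarith

theorem linearIndependent_of_inner_eq_zero_of_ne {ι : Type*} [Fintype ι] {x y : ι → V}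
    (hne : ∀ i, ⟪x i, y i⟫ ≠ 0) (hzero : ∀ i j, i ≠ j → ⟪x i, y j⟫ = 0) :
    LinearIndependent ℝ y := by
  refine Fintype.linearIndependent_iff.mpr fun g hg i => ?_
  have : ∑ j, g j * ⟪x i, y j⟫ = 0 := by
    simpa [inner_sum, real_inner_smul_right] using congrArg (⟪x i, ·⟫) hg
  rw [Finset.sum_eq_single i (fun j _ hji => by rw [hzero i j hji.symm, mul_zero])
    (by simp)] at this
  exact (mul_eq_zero.mp this).resolve_right (hne i)

theorem angle_eq_angle_of_inner_eq {x y x' y' : V} (hxy : ⟪x, y⟫ = ⟪x', y'⟫)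
    (hx : ⟪x, x⟫ = ⟪x', x'⟫) (hy : ⟪y, y⟫ = ⟪y', y'⟫) : angle x y = angle x' y' := by
  simp only [angle, norm_eq_sqrt_real_inner, hxy, hx, hy]

theorem inner_sub_inner_smul_sub_inner_smul {u : V} (hu : ‖u‖ = 1) (a b : V) :
    ⟪a - ⟪u, a⟫ • u, b - ⟪u, b⟫ • u⟫ = ⟪a, b⟫ - ⟪u, a⟫ * ⟪u, b⟫ := by
  simp only [inner_sub_left, inner_sub_right, real_inner_smul_left, real_inner_smul_right,
    inner_self_eq_one_of_norm_eq_one hu, real_inner_comm u]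
  ring

end InnerProductGeometry

namespace EuclideanSpace

open WithLp Matrix

noncomputable def cross (a b : EuclideanSpace ℝ (Fin 3)) : EuclideanSpace ℝ (Fin 3) :=
  toLp 2 (ofLp a ⨯₃ ofLp b)

theorem inner_eq_dotProduct {ι : Type*} [Fintype ι] (a b : EuclideanSpace ℝ ι) :
    ⟪a, b⟫ = ofLp a ⬝ᵥ ofLp b := by
  rw [inner_eq_star_dotProduct, star_trivial, dotProduct_comm]

theorem cross_anticomm (a b : EuclideanSpace ℝ (Fin 3)) : cross b a = -cross a b := by
  rw [cross, cross, ← _root_.cross_anticomm, toLp_neg]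

theorem inner_cross_cross (a b c d : EuclideanSpace ℝ (Fin 3)) :
    ⟪cross a b, cross c d⟫ = ⟪a, c⟫ * ⟪b, d⟫ - ⟪a, d⟫ * ⟪b, c⟫ := by
  simp only [inner_eq_dotProduct, cross, cross_dot_cross]

theorem inner_self_cross (a b : EuclideanSpace ℝ (Fin 3)) : ⟪a, cross a b⟫ = 0 := by
  simp only [inner_eq_dotProduct, cross, dot_self_cross]

theorem inner_cross_self (a b : EuclideanSpace ℝ (Fin 3)) : ⟪b, cross a b⟫ = 0 := by
  simp only [inner_eq_dotProduct, cross, dot_cross_self]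

theorem inner_cross_cyclic (a b c : EuclideanSpace ℝ (Fin 3)) :
    ⟪a, cross b c⟫ = ⟪b, cross c a⟫ := by
  simp only [inner_eq_dotProduct, cross]
  exact triple_product_permutation _ _ _

theorem inner_cross_ne_zero {a b c : EuclideanSpace ℝ (Fin 3)}
    (h : LinearIndependent ℝ ![a, b, c]) : ⟪a, cross b c⟫ ≠ 0 := by
  have hrows : LinearIndependent ℝ ![ofLp a, ofLp b, ofLp c] := by
    have := h.map' (WithLp.linearEquiv 2 ℝ (Fin 3 → ℝ)).toLinearMap (LinearEquiv.ker _)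
    rwa [show ⇑(WithLp.linearEquiv 2 ℝ (Fin 3 → ℝ)).toLinearMap ∘ ![a, b, c] =
      ![ofLp a, ofLp b, ofLp c] by funext i; fin_cases i <;> rfl] at this
  rw [inner_eq_dotProduct, cross, ofLp_toLp, triple_product_eq_det]
  exact ((linearIndependent_rows_iff_isUnit.mp hrows).map detMonoidHom).ne_zero

theorem linearIndependent_cross_cyclic {u v w : EuclideanSpace ℝ (Fin 3)}
    (h : LinearIndependent ℝ ![u, v, w]) :
    LinearIndependent ℝ ![cross v w, cross w u, cross u v] := by
  refine linearIndependent_of_inner_eq_zero_of_ne (x := ![u, v, w]) (fun i => ?_)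
    (fun i j hij => ?_)
  · have hv : ⟪v, cross w u⟫ ≠ 0 := inner_cross_cyclic u v w ▸ inner_cross_ne_zero h
    fin_cases i
    · exact inner_cross_ne_zero h
    · exact hv
    · exact inner_cross_cyclic v w u ▸ hv
  · fin_cases i <;> fin_cases j <;> simp [inner_self_cross, inner_cross_self] at hij ⊢

end EuclideanSpace

open EuclideanSpace

theorem sphAngle_eq_angle_cross {u : EuclideanSpace ℝ (Fin 3)} (hu : ‖u‖ = 1)
    (v w : EuclideanSpace ℝ (Fin 3)) : sphAngle u v w = angle (cross u v) (cross u w) := by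
  have key (a b : EuclideanSpace ℝ (Fin 3)) :
      ⟪a - ⟪u, a⟫ • u, b - ⟪u, b⟫ • u⟫ = ⟪cross u a, cross u b⟫ := by
    rw [inner_sub_inner_smul_sub_inner_smul hu, inner_cross_cross,
      inner_self_eq_one_of_norm_eq_one hu, real_inner_comm a u]
    ring
  exact angle_eq_angle_of_inner_eq (key v w) (key v v) (key w w)

theorem spherical_angle_sum (u v w : EuclideanSpace ℝ (Fin 3))
    (hu : ‖u‖ = 1) (hv : ‖v‖ = 1) (hw : ‖w‖ = 1)
    (hind : LinearIndependent ℝ ![u, v, w]) :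
    Real.pi < sphAngle u v w + sphAngle v u w + sphAngle w u v ∧
      sphAngle u v w + sphAngle v u w + sphAngle w u v < 3 * Real.pi := by
  set p := cross v w
  set q := cross w u
  set r := cross u v
  have hA : sphAngle u v w = π - angle q r := by
    rw [sphAngle_eq_angle_cross hu, EuclideanSpace.cross_anticomm w u, angle_neg_right,
      angle_comm]
  have hB : sphAngle v u w = π - angle r p := by
    rw [sphAngle_eq_angle_cross hv, EuclideanSpace.cross_anticomm u v, angle_neg_left]
  have hC : sphAngle w u v = π - angle p q := by
    rw [sphAngle_eq_angle_cross hw, EuclideanSpace.cross_anticomm v w, angle_neg_right,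
      angle_comm]
  have hpolar : LinearIndependent ℝ ![p, q, r] := linearIndependent_cross_cyclic hind
  have hlt := angle_add_angle_add_angle_lt_two_pi hpolar
  have hpos := angle_pos_of_linearIndependent (linearIndependent_finCons.mp hpolar).1
  rw [hA, hB, hC]
  constructor <;> linarith [angle_nonneg r p, angle_nonneg p q]
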